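/- Let r and s be natural numbers, n = r + 2s, and let A be a real n×n matrix satisfying J_{r+s,s} · Aᵀ · J_{r+s,s} = A (i.e. A is self-adjoint with respect to the bilinear form of signature (r+s, s) given by J_{r+s,s}). Then the characteristic polynomial of A has at least r real roots counted with multiplicity. -/

import Mathlib

/-!
Over `ℂ`, `A` is self-adjoint for the hermitian form `⟪x, y⟫ = ∑ εᵢ xᵢ conj yᵢ` of signature
`(r + s, s)`. The form pairs the generalized eigenspaces of `μ` and `ν` trivially unless
`ν = conj μ`, so the sum of the generalized eigenspaces over the open upper half plane is
isotropic, hence of dimension at most `s`; the same holds for the lower half plane. Thus at most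
`2 s` of the `r + 2 s` complex roots of the characteristic polynomial are non-real.
-/

open Matrix Polynomial Module

theorem Matrix.transpose_mul_eq_mul_of_mul_transpose_mul_eq {R n : Type*} [CommRing R] [Fintype n]
    [DecidableEq n] {J A : Matrix n n R} (hJ : J * J = 1) (hA : J * Aᵀ * J = A) :
    Aᵀ * J = J * A := by
  calc Aᵀ * J = (J * J) * Aᵀ * J := by rw [hJ, Matrix.one_mul]
    _ = J * A := by conv_rhs => rw [← hA]
                    simp only [Matrix.mul_assoc]

theorem Matrix.toLinearMapₛₗ₂'_apply_eq_dotProduct {R n : Type*} [CommRing R] [Fintype n]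
    [DecidableEq n] (σ : R →+* R) (J : Matrix n n R) (x y : n → R) :
    toLinearMapₛₗ₂' R (RingHom.id R) σ J x y = x ⬝ᵥ (J *ᵥ (σ ∘ y)) := by
  simp only [toLinearMapₛₗ₂'_apply, dotProduct, mulVec, Finset.mul_sum, smul_eq_mul,
    RingHom.id_apply, Function.comp_apply]
  exact Finset.sum_congr rfl fun _ _ => Finset.sum_congr rfl fun _ _ => by ring

theorem Matrix.isAdjointPair_toLinearMapₛₗ₂'_toLin' {R n : Type*} [CommRing R] [Fintype n]
    [DecidableEq n] (σ : R →+* R) {J A : Matrix n n R} (h : Aᵀ * J = J * A.map σ) :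
    LinearMap.IsAdjointPair (toLinearMapₛₗ₂' R (RingHom.id R) σ J)
      (toLinearMapₛₗ₂' R (RingHom.id R) σ J) (toLin' A) (toLin' A) := by
  intro x y
  have hσ : σ ∘ (A *ᵥ y) = A.map σ *ᵥ (σ ∘ y) := by
    ext i; simp [mulVec, dotProduct, map_sum]
  rw [toLinearMapₛₗ₂'_apply_eq_dotProduct, toLinearMapₛₗ₂'_apply_eq_dotProduct, toLin'_apply,
    toLin'_apply, hσ, mulVec_mulVec, ← h, ← mulVec_mulVec, dotProduct_mulVec x,
    vecMul_transpose]

section Sesquilinear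

variable {K M : Type*} [Field K] [AddCommGroup M] [Module K M] {σ : K →+* K}

theorem LinearMap.IsAdjointPair.apply_eq_zero_of_mem_maxGenEigenspace
    {B : M →ₗ[K] M →ₛₗ[σ] K} {f : Module.End K M} (hf : B.IsAdjointPair B f f)
    {μ ν : K} (hμν : σ ν ≠ μ) {x y : M} (hx : x ∈ f.maxGenEigenspace μ)
    (hy : y ∈ f.maxGenEigenspace ν) : B x y = 0 := by
  obtain ⟨k, hk⟩ := (f.mem_maxGenEigenspace μ x).1 hx
  obtain ⟨l, hl⟩ := (f.mem_maxGenEigenspace ν y).1 hy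
  clear hx hy
  induction k generalizing x y l with
  | zero => simp_all
  | succ k ihk =>
    induction l generalizing y with
    | zero => simp_all
    | succ l ihl =>
      have h₁ : B ((f - μ • 1) x) y = 0 := ihk (l := l + 1) (by rwa [pow_succ] at hk) hl
      have h₂ : B x ((f - ν • 1) y) = 0 := ihl (by rwa [pow_succ] at hl)
      have key : (σ ν - μ) * B x y = B ((f - μ • 1) x) y - B x ((f - ν • 1) y) := by
        simp only [LinearMap.sub_apply, LinearMap.smul_apply, Module.End.one_apply, map_sub,
          map_smulₛₗ, hf x y, smul_eq_mul, RingHom.id_apply]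
        ring
      rw [h₁, h₂, sub_zero] at key
      exact (mul_eq_zero.1 key).resolve_left (sub_ne_zero.2 hμν)

theorem LinearMap.apply_eq_zero_of_mem_biSup {ι : Type*} (B : M →ₗ[K] M →ₛₗ[σ] K)
    {V : ι → Submodule K M} {s : Set ι}
    (h : ∀ i ∈ s, ∀ j ∈ s, ∀ x ∈ V i, ∀ y ∈ V j, B x y = 0) {x y : M}
    (hx : x ∈ ⨆ i ∈ s, V i) (hy : y ∈ ⨆ i ∈ s, V i) : B x y = 0 := by
  have hleft : ∀ j ∈ s, ∀ y ∈ V j, ⨆ i ∈ s, V i ≤ LinearMap.ker (B.flip y) :=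
    fun j hj y hy => iSup₂_le fun i hi x hx => h i hi j hj x hx y hy
  exact (iSup₂_le fun j hj y hy x hx => hleft j hj y hy hx :
    ⨆ i ∈ s, V i ≤ (⨆ i ∈ s, V i).orthogonalBilin B) hy x hx

end Sesquilinear

theorem iSupIndep.finrank_biSup {K M ι : Type*} [DivisionRing K] [AddCommGroup M] [Module K M]
    [FiniteDimensional K M] {V : ι → Submodule K M} (hV : iSupIndep V) (t : Finset ι) :
    finrank K ↥(⨆ i ∈ t, V i) = ∑ i ∈ t, finrank K (V i) := by
  classical
  induction t using Finset.induction_on with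
  | empty => simp
  | insert a t ha ih =>
    have hdisj : V a ⊓ ⨆ i ∈ t, V i = ⊥ := (hV.disjoint_biSup (y := ↑t) ha).eq_bot
    have := Submodule.finrank_sup_add_finrank_inf_eq (V a) (⨆ i ∈ t, V i)
    rw [hdisj, finrank_bot, add_zero] at this
    rw [Finset.iSup_insert, Finset.sum_insert ha, this, ih]

theorem LinearMap.card_filter_roots_charpoly_le {K M : Type*} [Field K] [AddCommGroup M]
    [Module K M] [FiniteDimensional K M] (f : Module.End K M) (S : Set K)
    [DecidablePred (· ∈ S)] :
    (f.charpoly.roots.filter (· ∈ S)).card ≤ finrank K ↥(⨆ μ ∈ S, f.maxGenEigenspace μ) := by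
  classical
  set t := (f.charpoly.roots.filter (· ∈ S)).toFinset
  calc (f.charpoly.roots.filter (· ∈ S)).card
      = ∑ μ ∈ t, f.charpoly.rootMultiplicity μ := by
        rw [← Multiset.toFinset_sum_count_eq]
        refine Finset.sum_congr rfl fun μ hμ => ?_
        rw [Multiset.count_filter_of_pos (Multiset.of_mem_filter (Multiset.mem_toFinset.1 hμ)),
          count_roots]
    _ = finrank K ↥(⨆ μ ∈ t, f.maxGenEigenspace μ) := by
        simp only [(Module.End.independent_maxGenEigenspace f).finrank_biSup,
          LinearMap.finrank_maxGenEigenspace_eq]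
    _ ≤ finrank K ↥(⨆ μ ∈ S, f.maxGenEigenspace μ) :=
        Submodule.finrank_mono <| biSup_mono fun μ hμ =>
          Multiset.of_mem_filter (Multiset.mem_toFinset.1 hμ)

theorem finrank_le_card_of_isotropic {ι : Type*} [Fintype ι] [DecidableEq ι] (P : ι → Prop)
    [DecidablePred P] (W : Submodule ℂ (ι → ℂ))
    (hW : ∀ x ∈ W, toLinearMapₛₗ₂' ℂ (RingHom.id ℂ) (starRingEnd ℂ)
      (diagonal fun i => if P i then (1 : ℂ) else -1) x x = 0) :
    finrank ℂ W ≤ Fintype.card {i // ¬ P i} := by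
  let π : (ι → ℂ) →ₗ[ℂ] ({i // ¬ P i} → ℂ) := LinearMap.funLeft ℂ ℂ Subtype.val
  suffices hinj : Function.Injective (π ∘ₗ W.subtype) by
    simpa using LinearMap.finrank_le_finrank_of_injective hinj
  rw [← LinearMap.ker_eq_bot, LinearMap.ker_eq_bot']
  rintro ⟨x, hx⟩ hπx
  have hneg : ∀ i, ¬ P i → x i = 0 := fun i hi => congrFun hπx ⟨i, hi⟩
  -- on vectors supported on the positive coordinates the form is positive definite
  have hform : ((∑ i, Complex.normSq (x i) : ℝ) : ℂ) = 0 := by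
    rw [← hW x hx, toLinearMapₛₗ₂'_apply]
    push_cast
    refine Finset.sum_congr rfl fun i _ => ?_
    by_cases hi : P i
    · simp [diagonal_apply, hi, Complex.mul_conj]
    · simp [diagonal_apply, hi, hneg i hi]
  have hzero := (Finset.sum_eq_zero_iff_of_nonneg fun i _ => Complex.normSq_nonneg (x i)).1
    (by exact_mod_cast hform)
  ext i
  simpa using hzero i (Finset.mem_univ i)

theorem Matrix.card_filter_roots_charpoly_le_of_transpose_mul_diagonal {ι : Type*} [Fintype ι]
    [DecidableEq ι] (P : ι → Prop) [DecidablePred P] {A : Matrix ι ι ℂ}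
    (hA : Aᵀ * diagonal (fun i => if P i then 1 else -1) =
      diagonal (fun i => if P i then 1 else -1) * A.map (starRingEnd ℂ))
    (S : Set ℂ) [DecidablePred (· ∈ S)] (hS : ∀ μ ∈ S, ∀ ν ∈ S, starRingEnd ℂ ν ≠ μ) :
    (A.charpoly.roots.filter (· ∈ S)).card ≤ Fintype.card {i // ¬ P i} := by
  have hadj := isAdjointPair_toLinearMapₛₗ₂'_toLin' (starRingEnd ℂ) hA
  rw [← charpoly_toLin']
  refine (LinearMap.card_filter_roots_charpoly_le _ S).trans <|
    finrank_le_card_of_isotropic P _ fun x hx => ?_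
  exact LinearMap.apply_eq_zero_of_mem_biSup _ (fun μ hμ ν hν x hx y hy =>
    hadj.apply_eq_zero_of_mem_maxGenEigenspace (hS μ hμ ν hν) hx hy) hx hx

theorem Complex.card_filter_real_add_card_filter_im_pos_add_card_filter_im_neg
    (T : Multiset ℂ) [DecidablePred (· ∈ Complex.ofRealHom.range)] :
    (T.filter (· ∈ Complex.ofRealHom.range)).card + (T.filter (0 < ·.im)).card +
      (T.filter (·.im < 0)).card = T.card := by
  have hreal : ∀ z : ℂ, z ∈ Complex.ofRealHom.range ↔ z.im = 0 := fun z =>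
    ⟨by rintro ⟨x, rfl⟩; simp, fun h => ⟨z.re, Complex.ext (by simp) (by simp [h])⟩⟩
  rw [← Multiset.card_add, ← Multiset.card_add]
  congr 1
  ext z
  simp only [Multiset.count_add, Multiset.count_filter, hreal]
  rcases lt_trichotomy z.im 0 with h | h | h <;> split_ifs <;> simp_all <;> linarith

theorem Matrix.card_filter_roots_map_charpoly_le {ι : Type*} [Fintype ι] [DecidableEq ι]
    (P : ι → Prop) [DecidablePred P] {A : Matrix ι ι ℝ}
    (hA : diagonal (fun i => if P i then 1 else -1) * Aᵀ *
      diagonal (fun i => if P i then 1 else -1) = A)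
    (S : Set ℂ) [DecidablePred (· ∈ S)] (hS : ∀ μ ∈ S, ∀ ν ∈ S, starRingEnd ℂ ν ≠ μ) :
    ((A.charpoly.map Complex.ofRealHom).roots.filter (· ∈ S)).card ≤
      Fintype.card {i // ¬ P i} := by
  set J : Matrix ι ι ℝ := diagonal fun i => if P i then 1 else -1
  have hJJ : J * J = 1 := by
    rw [diagonal_mul_diagonal, ← diagonal_one]
    congr 1; ext i; split_ifs <;> norm_num
  have hJc : J.map Complex.ofRealHom = diagonal fun i => if P i then (1 : ℂ) else -1 := by
    rw [diagonal_map (map_zero _)]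
    congr 1; ext i; split_ifs <;> simp
  have hreal : (A.map Complex.ofRealHom).map (starRingEnd ℂ) = A.map Complex.ofRealHom := by
    ext; simp
  have hAc : (A.map Complex.ofRealHom)ᵀ * J.map Complex.ofRealHom =
      J.map Complex.ofRealHom * (A.map Complex.ofRealHom).map (starRingEnd ℂ) := by
    rw [hreal, ← transpose_map, ← Matrix.map_mul, ← Matrix.map_mul,
      transpose_mul_eq_mul_of_mul_transpose_mul_eq hJJ hA]
  rw [hJc] at hAc
  rw [← charpoly_map]
  exact card_filter_roots_charpoly_le_of_transpose_mul_diagonal P hAc S hS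

theorem Fin.card_subtype_not_val_lt (n m : ℕ) :
    Fintype.card {i : Fin n // ¬ (i : ℕ) < m} = n - m := by
  rw [Fintype.card_subtype, Finset.filter_not,
    Finset.card_sdiff_of_subset (Finset.filter_subset _ _), Fin.card_filter_val_lt,
    Finset.card_univ, Fintype.card_fin]
  omega

theorem stmt_10 (r s : ℕ) (A : Matrix (Fin (r + 2 * s)) (Fin (r + 2 * s)) ℝ)
    (J : Matrix (Fin (r + 2 * s)) (Fin (r + 2 * s)) ℝ)
    (hJ : J = Matrix.diagonal fun i : Fin (r + 2 * s) => if (i : ℕ) < r + s then (1 : ℝ) else -1)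
    (hA : J * Aᵀ * J = A) :
    r ≤ A.charpoly.roots.card := by
  classical
  subst hJ
  have hhalf := card_filter_roots_map_charpoly_le _ hA
  have hupper := hhalf {z | 0 < z.im} fun μ hμ ν hν h => by
    simp only [Set.mem_ofPred_eq, ← h, Complex.conj_im] at hμ hν; linarith
  have hlower := hhalf {z | z.im < 0} fun μ hμ ν hν h => by
    simp only [Set.mem_ofPred_eq, ← h, Complex.conj_im] at hμ hν; linarith
  have htotal := Complex.card_filter_real_add_card_filter_im_pos_add_card_filter_im_neg
    (A.charpoly.map Complex.ofRealHom).roots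
  rw [filter_roots_map_range_eq_map_roots Complex.ofRealHom.injective, Multiset.card_map,
    IsAlgClosed.card_roots_map_eq_natDegree_of_injective _ Complex.ofRealHom.injective,
    charpoly_natDegree_eq_dim, Fintype.card_fin] at htotal
  simp only [Set.mem_ofPred_eq, Fin.card_subtype_not_val_lt] at hupper hlower
  omega
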